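/- Let n ≥ 1 and let (K_i) be a sequence of nonempty compact convex subsets of Sⁿ converging in the Hausdorff distance to K_∞, where K_∞ has nonempty interior in Sⁿ and K_∞ ≠ Sⁿ. Then: (a) for every point x in the interior of K_∞ there exists N such that x lies in the interior of K_i for all i ≥ N; and (b) for all sufficiently large i the frontier of K_i in Sⁿ is nonempty, and the frontiers of K_i converge to the frontier of K_∞ in the Hausdorff distance. (The final part of Theorem 2.8 of the paper.) -/

import Mathlib

/-!
The cone `Ici 0 • K` over a spherically convex `K` is convex, so at a point `p` of the sphere
that is not interior to `K` a supporting hyperplane gives a unit vector `v` with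
`⟪v, k⟫ ≤ 0 ≤ ⟪v, p⟫` for all `k ∈ K`. Pushing `p` slightly in the direction `v` gives a point
of the sphere near `p` that is uniformly far from `K`. So a set Hausdorff-close to `K` cannot
contain a whole cap around `p`, which gives (a). At a frontier point `p` of `K i` (or of `L`) the
same point lies outside the other set, while a point of the other set lies near `p`; the
normalized segment joining the two is connected, so it crosses the frontier of the other set
near `p`. Finally `L` has a frontier point because `Sⁿ` is connected for `n ≥ 1`.
-/

open scoped RealInnerProductSpace

noncomputable section

/-- `Esp n` is `ℝ^{n+1}` with its standard inner product. -/
abbrev Esp (n : ℕ) : Type := EuclideanSpace ℝ (Fin (n + 1))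

/-- The unit sphere `Sⁿ ⊆ ℝ^{n+1}`. -/
def sphereSet (n : ℕ) : Set (Esp n) := {x | ‖x‖ = 1}

/-- A convex segment in `Sⁿ`: `{(cos t)·u + (sin t)·v : 0 ≤ t ≤ a}` for an
orthonormal pair `u, v` and some `a ∈ [0, π]`. -/
def IsConvexSegment {n : ℕ} (S : Set (Esp n)) : Prop :=
  ∃ (u v : Esp n) (a : ℝ), ‖u‖ = 1 ∧ ‖v‖ = 1 ∧ ⟪u, v⟫ = 0 ∧
    0 ≤ a ∧ a ≤ Real.pi ∧
    S = (fun t : ℝ => Real.cos t • u + Real.sin t • v) '' Set.Icc 0 a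

/-- A subset of `Sⁿ` is convex if any two of its points are contained in a
convex segment contained in the set. -/
def SphConvex {n : ℕ} (A : Set (Esp n)) : Prop :=
  ∀ x ∈ A, ∀ y ∈ A, ∃ S : Set (Esp n), IsConvexSegment S ∧ S ⊆ A ∧ x ∈ S ∧ y ∈ S

/-- Convergence of a sequence of subsets of `Sⁿ` in the Hausdorff distance. -/
def HConv {n : ℕ} (K : ℕ → Set (Esp n)) (L : Set (Esp n)) : Prop :=
  Filter.Tendsto (fun i => Metric.hausdorffDist (K i) L) Filter.atTop (nhds 0)

/-- The interior of a subset of the sphere, in the subspace topology of `Sⁿ`. -/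
def sphInterior {n : ℕ} (X : Set (Esp n)) : Set (Esp n) :=
  Subtype.val '' interior (Subtype.val ⁻¹' X : Set ↥(sphereSet n))

/-- The frontier of a subset of the sphere, in the subspace topology of `Sⁿ`. -/
def sphFrontier {n : ℕ} (X : Set (Esp n)) : Set (Esp n) :=
  Subtype.val '' frontier (Subtype.val ⁻¹' X : Set ↥(sphereSet n))

open scoped Pointwise
open Set Metric Real Filter

theorem IsPreconnected.inter_frontier_nonempty {X : Type*} [TopologicalSpace X] {s t : Set X}
    (hs : IsPreconnected s) (hst : (s ∩ t).Nonempty) (hst' : (s \ t).Nonempty) :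
    (s ∩ frontier t).Nonempty := by
  have := Subtype.preconnectedSpace hs
  obtain ⟨x, hxs, hxt⟩ := hst
  obtain ⟨y, hys, hyt⟩ := hst'
  obtain ⟨z, hz⟩ := nonempty_frontier_iff.2
    ⟨⟨⟨x, hxs⟩, hxt⟩, (ne_univ_iff_exists_notMem (((↑) : s → X) ⁻¹' t)).2 ⟨⟨y, hys⟩, hyt⟩⟩
  exact ⟨z, z.2, continuous_subtype_val.frontier_preimage_subset t hz⟩

theorem dist_normalize_le {E : Type*} [NormedAddCommGroup E] [NormedSpace ℝ E] {p : E}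
    (hp : ‖p‖ = 1) (w : E) : dist (NormedSpace.normalize w) p ≤ 2 * dist w p := by
  rcases eq_or_ne w 0 with rfl | hw
  · simp [NormedSpace.normalize, hp]
  have hnorm : dist (NormedSpace.normalize w) w ≤ dist w p :=
    calc dist (NormedSpace.normalize w) w = ‖(1 - ‖w‖) • NormedSpace.normalize w‖ := by
          rw [dist_eq_norm, sub_smul, one_smul, NormedSpace.norm_smul_normalize]
      _ = |‖p‖ - ‖w‖| := by
          rw [norm_smul, NormedSpace.norm_normalize hw, mul_one, norm_eq_abs, hp]
      _ ≤ dist w p := by rw [abs_sub_comm, dist_eq_norm]; exact abs_norm_sub_norm_le w p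
  linarith [dist_triangle (NormedSpace.normalize w) w p]

theorem exists_polar_nonneg_combination {ψ c₁ c₂ : ℝ} (hψ₀ : 0 ≤ ψ) (hψ : ψ ≤ π)
    (hc₁ : 0 ≤ c₁) (hc₂ : 0 ≤ c₂) :
    ∃ m φ, 0 ≤ m ∧ 0 ≤ φ ∧ φ ≤ ψ ∧
      c₁ + c₂ * cos ψ = m * cos φ ∧ c₂ * sin ψ = m * sin φ := by
  set z : ℂ := c₁ + c₂ * Complex.exp (ψ * Complex.I)
  have hre : z.re = c₁ + c₂ * cos ψ := by simp [z, Complex.exp_ofReal_mul_I_re]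
  have him : z.im = c₂ * sin ψ := by simp [z, Complex.exp_ofReal_mul_I_im]
  refine ⟨‖z‖, z.arg, norm_nonneg z, Complex.arg_nonneg_iff.2 ?_, ?_,
    by rw [Complex.norm_mul_cos_arg, hre], by rw [Complex.norm_mul_sin_arg, him]⟩
  · rw [him]; exact mul_nonneg hc₂ (sin_nonneg_of_nonneg_of_le_pi hψ₀ hψ)
  -- `arg z ≤ ψ` because `‖z‖ * cos ψ ≤ re z`, as `c₂ - c₁ ≤ ‖z‖ ≤ c₁ + c₂`.
  · by_contra! hlt
    have hcos := cos_lt_cos_of_nonneg_of_le_pi hψ₀ (Complex.arg_le_pi z) hlt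
    have hexp : ‖(c₂ : ℂ) * Complex.exp (ψ * Complex.I)‖ = c₂ := by
      rw [norm_mul, Complex.norm_exp_ofReal_mul_I, mul_one, Complex.norm_real, norm_of_nonneg hc₂]
    have hup : ‖z‖ ≤ c₁ + c₂ := by
      have := norm_add_le (c₁ : ℂ) (c₂ * Complex.exp (ψ * Complex.I))
      rwa [hexp, Complex.norm_real, norm_of_nonneg hc₁] at this
    have hlow : c₂ - c₁ ≤ ‖z‖ := by
      have := norm_sub_norm_le (c₂ * Complex.exp (ψ * Complex.I)) (-(c₁ : ℂ))
      rwa [hexp, norm_neg, Complex.norm_real, norm_of_nonneg hc₁, sub_neg_eq_add, add_comm] at this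
    have hz : 0 < ‖z‖ := norm_pos_iff.2 fun h0 => by simp [h0] at hlt; linarith
    have := Complex.norm_mul_cos_arg z
    rw [hre] at this
    have := mul_lt_mul_of_pos_left hcos hz
    rcases le_total 0 (cos ψ) with h | h <;> nlinarith [cos_le_one ψ, neg_one_le_cos ψ]

theorem exists_smul_arc_eq_add {E : Type*} [AddCommGroup E] [Module ℝ E] (u v : E)
    {a s₁ s₂ c₁ c₂ : ℝ} (ha : a ≤ π) (hs₁ : s₁ ∈ Icc 0 a) (hs₂ : s₂ ∈ Icc 0 a)
    (hc₁ : 0 ≤ c₁) (hc₂ : 0 ≤ c₂) :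
    ∃ m θ : ℝ, 0 ≤ m ∧ θ ∈ Icc 0 a ∧
      c₁ • (cos s₁ • u + sin s₁ • v) + c₂ • (cos s₂ • u + sin s₂ • v) =
        m • (cos θ • u + sin θ • v) := by
  wlog h : s₁ ≤ s₂ generalizing s₁ s₂ c₁ c₂
  · obtain ⟨m, θ, hm, hθ, heq⟩ := this hs₂ hs₁ hc₂ hc₁ (le_of_not_ge h)
    exact ⟨m, θ, hm, hθ, by rw [add_comm, heq]⟩
  obtain ⟨m, φ, hm, hφ₀, hφ, hcos, hsin⟩ :=
    exists_polar_nonneg_combination (sub_nonneg.2 h) (by linarith [hs₂.2, hs₁.1]) hc₁ hc₂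
  refine ⟨m, s₁ + φ, hm, ⟨by linarith [hs₁.1], by linarith [hs₂.2]⟩, ?_⟩
  have hs₂ : s₂ = s₁ + (s₂ - s₁) := by ring
  have e₁ : c₁ * cos s₁ + c₂ * cos s₂ = m * cos (s₁ + φ) := by
    rw [hs₂, cos_add, cos_add]; linear_combination cos s₁ * hcos - sin s₁ * hsin
  have e₂ : c₁ * sin s₁ + c₂ * sin s₂ = m * sin (s₁ + φ) := by
    rw [hs₂, sin_add, sin_add]; linear_combination sin s₁ * hcos + cos s₁ * hsin
  linear_combination (norm := module) e₁ • u + e₂ • v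

theorem SphConvex.convex_Ici_smul {n : ℕ} {K : Set (Esp n)} (hK : SphConvex K) :
    Convex ℝ (Ici (0 : ℝ) • K) := by
  rintro _ ⟨t₁, ht₁, k₁, hk₁, rfl⟩ _ ⟨t₂, ht₂, k₂, hk₂, rfl⟩ a b ha hb -
  obtain ⟨S, ⟨u, v, α, -, -, -, -, hα, rfl⟩, hSK, ⟨s₁, hs₁, rfl⟩, ⟨s₂, hs₂, rfl⟩⟩ :=
    hK k₁ hk₁ k₂ hk₂
  obtain ⟨m, θ, hm, hθ, heq⟩ :=
    exists_smul_arc_eq_add u v hα hs₁ hs₂ (mul_nonneg ha ht₁) (mul_nonneg hb ht₂)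
  exact ⟨m, hm, _, hSK ⟨θ, hθ, rfl⟩, by rw [smul_smul, smul_smul, heq]⟩

theorem exists_ne_zero_forall_inner_le_of_notMem_interior {E : Type*} [NormedAddCommGroup E]
    [InnerProductSpace ℝ E] [FiniteDimensional ℝ E] {C : Set E} (hC : Convex ℝ C)
    (hCne : C.Nonempty) {x : E} (hx : x ∉ interior C) :
    ∃ v ≠ 0, ∀ a ∈ C, ⟪v, a⟫ ≤ ⟪v, x⟫ := by
  rcases (interior C).eq_empty_or_nonempty with hint | hint
  -- With empty interior, `C` lies in a proper affine subspace and a normal vector to it is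
  -- constant on `C`.
  · obtain ⟨c, hc⟩ := hCne
    have hspan : vectorSpan ℝ C ≠ ⊤ := by
      rw [← direction_affineSpan, Ne, AffineSubspace.direction_eq_top_iff_of_nonempty
        ((affineSpan_nonempty ℝ).2 ⟨c, hc⟩), ← hC.interior_nonempty_iff_affineSpan_eq_top, hint]
      exact not_nonempty_empty
    obtain ⟨v, hv, hv0⟩ := Submodule.ne_bot_iff _ |>.1 <|
      mt Submodule.orthogonal_eq_bot_iff.1 hspan
    have hconst : ∀ a ∈ C, ⟪v, a⟫ = ⟪v, c⟫ := fun a ha => by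
      have := Submodule.inner_right_of_mem_orthogonal (vsub_mem_vectorSpan ℝ ha hc) hv
      rw [vsub_eq_sub, real_inner_comm, inner_sub_right] at this
      linarith
    rcases le_total ⟪v, c⟫ ⟪v, x⟫ with h | h
    · exact ⟨v, hv0, fun a ha => (hconst a ha).trans_le h⟩
    · refine ⟨-v, neg_ne_zero.2 hv0, fun a ha => ?_⟩
      rw [inner_neg_left, inner_neg_left, hconst a ha]
      exact neg_le_neg h
  · obtain ⟨f, hf0, hf⟩ := geometric_hahn_banach_of_nonempty_interior_point hC hx hint
    refine ⟨(InnerProductSpace.toDual ℝ E).symm f, by simpa using hf0, fun a ha => ?_⟩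
    simpa only [InnerProductSpace.toDual_symm_apply] using hf a ha

theorem exists_norm_eq_one_dist_le_le_inner {E : Type*} [NormedAddCommGroup E]
    [InnerProductSpace ℝ E] {p v : E} (hp : ‖p‖ = 1) (hv : ‖v‖ = 1) (hvp : 0 ≤ ⟪v, p⟫)
    {s : ℝ} (hs₀ : 0 ≤ s) (hs₁ : s ≤ 1) :
    ∃ y, ‖y‖ = 1 ∧ dist y p ≤ 2 * s ∧ s / 2 ≤ ⟪v, y⟫ := by
  set w := p + s • v
  have hw_sq : ‖w‖ ^ 2 = 1 + 2 * s * ⟪v, p⟫ + s ^ 2 := by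
    rw [norm_add_sq_real, hp, real_inner_smul_right, real_inner_comm, norm_smul, hv,
      norm_of_nonneg hs₀]
    ring
  have hw₁ : 1 ≤ ‖w‖ := by nlinarith [norm_nonneg w]
  have hw₂ : ‖w‖ ≤ 2 :=
    (norm_add_le _ _).trans (by rw [hp, norm_smul, hv, norm_of_nonneg hs₀]; linarith)
  refine ⟨NormedSpace.normalize w, NormedSpace.norm_normalize ?_, ?_, ?_⟩
  · exact norm_ne_zero_iff.1 (by linarith)
  · calc dist (NormedSpace.normalize w) p ≤ 2 * dist w p := dist_normalize_le hp w
      _ = 2 * s := by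
          rw [dist_eq_norm, add_sub_cancel_left, norm_smul, hv, norm_of_nonneg hs₀, mul_one]
  · rw [NormedSpace.normalize, real_inner_smul_right, inner_add_right, real_inner_smul_right,
      real_inner_self_eq_norm_sq, hv]
    rw [inv_mul_eq_div, le_div_iff₀ (by linarith)]
    nlinarith

section

variable {n : ℕ}

theorem mem_sphInterior_iff {K : Set (Esp n)} {p : Esp n} :
    p ∈ sphInterior K ↔ p ∈ sphereSet n ∧ ∃ r > 0, ∀ y ∈ sphereSet n, dist y p < r → y ∈ K := by
  constructor
  · rintro ⟨P, hP, rfl⟩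
    obtain ⟨r, hr, hball⟩ := Metric.isOpen_iff.1 isOpen_interior P hP
    exact ⟨P.2, r, hr, fun y hy hyp =>
      interior_subset (s := Subtype.val ⁻¹' K) (hball (show ⟨y, hy⟩ ∈ ball P r from hyp))⟩
  · rintro ⟨hp, r, hr, h⟩
    refine ⟨⟨p, hp⟩, mem_interior_iff_mem_nhds.2 (Metric.mem_nhds_iff.2 ⟨r, hr, ?_⟩), rfl⟩
    exact fun y hy => h y y.2 hy

theorem sphInterior_subset (K : Set (Esp n)) : sphInterior K ⊆ K := by
  rintro _ ⟨P, hP, rfl⟩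
  exact interior_subset (s := Subtype.val ⁻¹' K) hP

theorem sphFrontier_subset {A : Set (Esp n)} (hA : IsClosed A) : sphFrontier A ⊆ A := by
  rintro _ ⟨P, hP, rfl⟩
  exact (hA.preimage continuous_subtype_val).closure_subset hP.1

theorem notMem_sphInterior_of_mem_sphFrontier {A : Set (Esp n)} {p : Esp n}
    (hp : p ∈ sphFrontier A) : p ∉ sphInterior A := by
  rintro ⟨P, hPi, rfl⟩
  obtain ⟨Q, hQ, hQP⟩ := hp
  exact hQ.2 (Subtype.ext hQP ▸ hPi)

theorem Ici_smul_inter_sphereSet_subset {K : Set (Esp n)} (hK : K ⊆ sphereSet n) :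
    Ici (0 : ℝ) • K ∩ sphereSet n ⊆ K := by
  rintro _ ⟨⟨t, ht, k, hk, rfl⟩, htk⟩
  have hk1 : ‖k‖ = 1 := hK hk
  have : t = 1 := by
    simpa [sphereSet, norm_smul, hk1, abs_of_nonneg (show 0 ≤ t from ht)] using htk
  simpa [this] using hk

theorem SphConvex.exists_unit_inner_nonpos {K : Set (Esp n)} (hK : SphConvex K)
    (hKs : K ⊆ sphereSet n) (hKne : K.Nonempty) {p : Esp n} (hp : p ∈ sphereSet n)
    (hpK : p ∉ sphInterior K) : ∃ v : Esp n, ‖v‖ = 1 ∧ 0 ≤ ⟪v, p⟫ ∧ ∀ k ∈ K, ⟪v, k⟫ ≤ 0 := by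
  obtain ⟨k₀, hk₀⟩ := hKne
  have hpC : p ∉ interior (Ici (0 : ℝ) • K) := fun hpC => by
    obtain ⟨r, hr, hball⟩ := Metric.isOpen_iff.1 isOpen_interior p hpC
    exact hpK (mem_sphInterior_iff.2 ⟨hp, r, hr, fun y hy hyp =>
      Ici_smul_inter_sphereSet_subset hKs ⟨interior_subset (hball hyp), hy⟩⟩)
  obtain ⟨v, hv0, hv⟩ := exists_ne_zero_forall_inner_le_of_notMem_interior
    hK.convex_Ici_smul ⟨_, smul_mem_smul self_mem_Ici hk₀⟩ hpC
  have hvp : 0 ≤ ⟪v, p⟫ := by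
    simpa using hv 0 ⟨0, self_mem_Ici, k₀, hk₀, zero_smul ℝ k₀⟩
  have hvK : ∀ k ∈ K, ⟪v, k⟫ ≤ 0 := fun k hk => by
    by_contra! hpos
    have := hv (((⟪v, p⟫ + 1) / ⟪v, k⟫) • k) (smul_mem_smul (mem_Ici.2 (by positivity)) hk)
    rw [real_inner_smul_right, div_mul_cancel₀ _ hpos.ne'] at this
    linarith
  have hv₀ : 0 < ‖v‖ := norm_pos_iff.2 hv0
  refine ⟨‖v‖⁻¹ • v, by rw [norm_smul, norm_inv, norm_norm, inv_mul_cancel₀ hv₀.ne'], ?_, ?_⟩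
  · rw [real_inner_smul_left]; positivity
  · intro k hk
    rw [real_inner_smul_left]
    exact mul_nonpos_of_nonneg_of_nonpos (by positivity) (hvK k hk)

theorem SphConvex.exists_dist_le_forall_le_dist {K : Set (Esp n)} (hK : SphConvex K)
    (hKs : K ⊆ sphereSet n) (hKne : K.Nonempty) {p : Esp n} (hp : p ∈ sphereSet n)
    (hpK : p ∉ sphInterior K) {s : ℝ} (hs₀ : 0 ≤ s) (hs₁ : s ≤ 1) :
    ∃ y ∈ sphereSet n, dist y p ≤ 2 * s ∧ ∀ k ∈ K, s / 2 ≤ dist y k := by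
  obtain ⟨v, hv, hvp, hvK⟩ := hK.exists_unit_inner_nonpos hKs hKne hp hpK
  obtain ⟨y, hy, hyp, hvy⟩ := exists_norm_eq_one_dist_le_le_inner hp hv hvp hs₀ hs₁
  refine ⟨y, hy, hyp, fun k hk => ?_⟩
  calc s / 2 ≤ ⟪v, y - k⟫ := by rw [inner_sub_right]; linarith [hvK k hk]
    _ ≤ ‖v‖ * ‖y - k‖ := real_inner_le_norm v _
    _ = dist y k := by rw [hv, one_mul, dist_eq_norm]

theorem SphConvex.mem_sphInterior_of_forall_exists_dist_lt {K : Set (Esp n)} (hK : SphConvex K)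
    (hKs : K ⊆ sphereSet n) {p : Esp n} (hp : p ∈ sphereSet n) {h : ℝ} (hh₀ : 0 < h)
    (hh₁ : 2 * h ≤ 1) (hnear : ∀ y ∈ sphereSet n, dist y p ≤ 4 * h → ∃ k ∈ K, dist y k < h) :
    p ∈ sphInterior K := by
  by_contra hpK
  have hKne : K.Nonempty :=
    let ⟨k, hk, _⟩ := hnear p hp (by rw [dist_self]; positivity)
    ⟨k, hk⟩
  obtain ⟨y, hy, hyp, hyK⟩ := hK.exists_dist_le_forall_le_dist hKs hKne hp hpK
    (by positivity : 0 ≤ 2 * h) hh₁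
  obtain ⟨k, hk, hyk⟩ := hnear y hy (by linarith)
  linarith [hyK k hk]

theorem exists_mem_sphFrontier_dist_le_of_mem_of_notMem {B : Set (Esp n)} {p q y : Esp n}
    (hp : p ∈ sphereSet n) (hq : q ∈ sphereSet n) (hy : y ∈ sphereSet n) (hqB : q ∈ B)
    (hyB : y ∉ B) {m : ℝ} (hm : m < 1) (hqp : dist q p ≤ m) (hyp : dist y p ≤ m) :
    ∃ f ∈ sphFrontier B, dist f p ≤ 2 * m := by
  set T := NormedSpace.normalize '' segment ℝ q y
  have hseg : segment ℝ q y ⊆ closedBall p m :=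
    (convex_closedBall p m).segment_subset hqp hyp
  have hne : ∀ w ∈ segment ℝ q y, w ≠ 0 := fun w hw h0 => by
    have := hseg hw
    rw [h0, mem_closedBall, dist_comm, dist_zero_right] at this
    exact absurd (hp ▸ this) (not_le.2 hm)
  have hTs : T ⊆ sphereSet n := by
    rintro _ ⟨w, hw, rfl⟩
    exact NormedSpace.norm_normalize (hne w hw)
  have hTp : ∀ z ∈ T, dist z p ≤ 2 * m := by
    rintro _ ⟨w, hw, rfl⟩
    exact (dist_normalize_le hp w).trans (by linarith [mem_closedBall.1 (hseg hw)])
  have hT : IsPreconnected T := by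
    refine (convex_segment q y).isPreconnected.image _ fun w hw => ?_
    exact ((continuous_norm.continuousAt.inv₀ (norm_ne_zero_iff.2 (hne w hw))).smul
      continuousAt_id).continuousWithinAt
  have hT' : IsPreconnected (Subtype.val ⁻¹' T : Set (sphereSet n)) := by
    rwa [← Topology.IsInducing.subtypeVal.isPreconnected_image,
      Subtype.image_preimage_coe, inter_eq_right.2 hTs]
  have hqT : q ∈ T :=
    ⟨q, left_mem_segment ℝ q y, NormedSpace.normalize_eq_self_of_norm_eq_one hq⟩
  have hyT : y ∈ T :=
    ⟨y, right_mem_segment ℝ q y, NormedSpace.normalize_eq_self_of_norm_eq_one hy⟩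
  obtain ⟨f, hfT, hf⟩ := hT'.inter_frontier_nonempty (t := Subtype.val ⁻¹' B)
    ⟨⟨q, hq⟩, hqT, hqB⟩ ⟨⟨y, hy⟩, hyT, hyB⟩
  exact ⟨f, ⟨f, hf, rfl⟩, hTp f hfT⟩

theorem isPreconnected_sphereSet (hn : 1 ≤ n) : IsPreconnected (sphereSet n) := by
  have hrank : 1 < Module.rank ℝ (Esp n) := by
    rw [← Module.finrank_eq_rank, finrank_euclideanSpace_fin]
    exact_mod_cast Nat.lt_add_of_pos_left hn
  have : sphereSet n = sphere (0 : Esp n) 1 := by ext; simp [sphereSet]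
  exact this ▸ (isConnected_sphere hrank 0 zero_le_one).isPreconnected

theorem sphFrontier_nonempty (hn : 1 ≤ n) {A : Set (Esp n)} (hA : A.Nonempty)
    (hAs : A ⊆ sphereSet n) (hAne : A ≠ sphereSet n) : (sphFrontier A).Nonempty := by
  have := Subtype.preconnectedSpace (isPreconnected_sphereSet hn)
  obtain ⟨a, ha⟩ := hA
  obtain ⟨z, hz, hzA⟩ := exists_of_ssubset (hAs.ssubset_of_ne hAne)
  refine (nonempty_frontier_iff.2 ⟨⟨⟨a, hAs ha⟩, ha⟩, ?_⟩).image _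
  exact (ne_univ_iff_exists_notMem _).2 ⟨⟨z, hz⟩, hzA⟩

theorem SphConvex.exists_mem_sphFrontier_dist_le {A B : Set (Esp n)} (hA : SphConvex A)
    (hAc : IsClosed A) (hAs : A ⊆ sphereSet n) (hBs : B ⊆ sphereSet n) {h η : ℝ}
    (hη : η < 2) (hhη : 8 * h ≤ η) (hAB : ∀ a ∈ A, ∃ b ∈ B, dist a b < h)
    (hBA : ∀ b ∈ B, ∃ a ∈ A, dist b a < h) :
    ∀ p ∈ sphFrontier A, ∃ f ∈ sphFrontier B, dist p f ≤ η := by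
  intro p hp
  have hpA := sphFrontier_subset hAc hp
  obtain ⟨q, hqB, hpq⟩ := hAB p hpA
  have hh₀ : 0 < h := dist_nonneg.trans_lt hpq
  obtain ⟨y, hy, hyp, hyA⟩ := hA.exists_dist_le_forall_le_dist hAs ⟨p, hpA⟩ (hAs hpA)
    (notMem_sphInterior_of_mem_sphFrontier hp) (by positivity : 0 ≤ 2 * h) (by linarith)
  have hyB : y ∉ B := fun hyB => by
    obtain ⟨a, ha, hya⟩ := hBA y hyB
    linarith [hyA a ha]
  obtain ⟨f, hf, hfp⟩ := exists_mem_sphFrontier_dist_le_of_mem_of_notMem (hAs hpA) (hBs hqB)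
    hy hqB hyB (by linarith : 4 * h < 1) (by rw [dist_comm]; linarith) (by linarith)
  exact ⟨f, hf, by rw [dist_comm]; linarith⟩

theorem HConv.eventually_forall_exists_dist_lt {K : ℕ → Set (Esp n)} {L : Set (Esp n)}
    (hlim : HConv K L) (hK : ∀ i, IsCompact (K i)) (hKne : ∀ i, (K i).Nonempty)
    (hL : IsCompact L) (hLne : L.Nonempty) {h : ℝ} (hh : 0 < h) :
    ∀ᶠ i in atTop, (∀ a ∈ K i, ∃ b ∈ L, dist a b < h) ∧ ∀ b ∈ L, ∃ a ∈ K i, dist b a < h := by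
  filter_upwards [hlim.eventually (gt_mem_nhds hh)] with i hi
  have hfin := hausdorffEDist_ne_top_of_nonempty_of_bounded (hKne i) hLne (hK i).isBounded
    hL.isBounded
  refine ⟨fun a ha => exists_dist_lt_of_hausdorffDist_lt ha hi hfin, fun b hb => ?_⟩
  rw [hausdorffDist_comm] at hi
  rw [hausdorffEDist_comm] at hfin
  exact exists_dist_lt_of_hausdorffDist_lt hb hi hfin

end

/-- Theorem 2.8 (final part): if nonempty compact convex subsets `K i` of `Sⁿ`
converge in the Hausdorff distance to a compact convex set `L` with nonempty
interior in `Sⁿ` and `L ≠ Sⁿ`, then (a) every interior point of `L` is an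
interior point of `K i` for all large `i`, and (b) for all large `i` the
frontier of `K i` in `Sⁿ` is nonempty and the frontiers converge in the
Hausdorff distance to the frontier of `L`. -/
theorem sphConvex_frontier_convergence (n : ℕ) (hn : 1 ≤ n)
    (K : ℕ → Set (Esp n)) (L : Set (Esp n))
    (hne : ∀ i, (K i).Nonempty) (hcpt : ∀ i, IsCompact (K i))
    (hsub : ∀ i, K i ⊆ sphereSet n) (hc : ∀ i, SphConvex (K i))
    (hLsub : L ⊆ sphereSet n) (hLcpt : IsCompact L) (hLc : SphConvex L)
    (hLint : (sphInterior L).Nonempty) (hLne : L ≠ sphereSet n)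
    (hlim : HConv K L) :
    (∀ x ∈ sphInterior L, ∃ N : ℕ, ∀ i ≥ N, x ∈ sphInterior (K i)) ∧
    (∃ N : ℕ, ∀ i ≥ N, (sphFrontier (K i)).Nonempty) ∧
    Filter.Tendsto
      (fun i => Metric.hausdorffDist (sphFrontier (K i)) (sphFrontier L))
      Filter.atTop (nhds 0) := by
  have hLne' : L.Nonempty := hLint.mono (sphInterior_subset L)
  have hclose {h : ℝ} (hh : 0 < h) :=
    hlim.eventually_forall_exists_dist_lt hcpt hne hLcpt hLne' hh
  have hfront {η : ℝ} (hη : 0 < η) (hη₂ : η < 2) : ∀ᶠ i in atTop,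
      (∀ p ∈ sphFrontier (K i), ∃ f ∈ sphFrontier L, dist p f ≤ η) ∧
        ∀ p ∈ sphFrontier L, ∃ f ∈ sphFrontier (K i), dist p f ≤ η :=
    (hclose (by positivity : 0 < η / 8)).mono fun i ⟨hKL, hLK⟩ =>
      ⟨(hc i).exists_mem_sphFrontier_dist_le (hcpt i).isClosed (hsub i) hLsub hη₂
          (by linarith) hKL hLK,
        hLc.exists_mem_sphFrontier_dist_le hLcpt.isClosed hLsub (hsub i) hη₂
          (by linarith) hLK hKL⟩
  refine ⟨fun x hx => ?_, ?_, ?_⟩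
  · obtain ⟨hx₁, r, hr, hrL⟩ := mem_sphInterior_iff.1 hx
    have hδ : 0 < min (r / 8) (1 / 2) := by positivity
    obtain ⟨N, hN⟩ := eventually_atTop.1 (hclose hδ)
    refine ⟨N, fun i hi => (hc i).mem_sphInterior_of_forall_exists_dist_lt (hsub i) hx₁ hδ
      (by linarith [min_le_right (r / 8) (1 / 2)]) fun y hy hyx => ?_⟩
    exact (hN i hi).2 y (hrL y hy (by linarith [min_le_left (r / 8) (1 / 2)]))
  · obtain ⟨p, hp⟩ := sphFrontier_nonempty hn hLne' hLsub hLne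
    obtain ⟨N, hN⟩ := eventually_atTop.1 (hfront one_pos one_lt_two)
    exact ⟨N, fun i hi => let ⟨f, hf, _⟩ := (hN i hi).2 p hp; ⟨f, hf⟩⟩
  · refine Metric.tendsto_nhds.2 fun ε hε => ?_
    have hη : min (ε / 2) 1 < 2 := (min_le_right _ _).trans_lt one_lt_two
    filter_upwards [hfront (by positivity) hη] with i ⟨hKL, hLK⟩
    rw [dist_zero_right, norm_of_nonneg hausdorffDist_nonneg]
    exact (hausdorffDist_le_of_mem_dist (by positivity) hKL hLK).trans_lt
      (by linarith [min_le_left (ε / 2) 1])
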